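/- Let p > q > 0 be reals, n ≥ 2, and A as above. Any vector of the form q·e_i ± p·e_j with i ≠ j that is not a column of A does not belong to the lattice A·ℤ^n. -/

import Mathlib

/-- The matrix `A` with `q` on the diagonal, `-p` on the subdiagonal,
`p` in the top-right corner (entry `(1,n)`), and `0` elsewhere. -/
def tilingMatrix (p q : ℝ) (n : ℕ) : Matrix (Fin n) (Fin n) ℝ :=
  Matrix.of fun i j =>
    if (i : ℕ) = (j : ℕ) then q
    else if (i : ℕ) = (j : ℕ) + 1 then -p
    else if (i : ℕ) = 0 ∧ (j : ℕ) = n - 1 then p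
    else 0

/-- The lattice `A·ℤⁿ` of integer linear combinations of the columns of `A`. -/
def latticeA (p q : ℝ) (n : ℕ) : Set (Fin n → ℝ) :=
  {x | ∃ z : Fin n → ℤ, x = (tilingMatrix p q n).mulVec fun i => (z i : ℝ)}

/-!
Write `A = q·I - p·S`, where `S` is the negacyclic shift, and let `z ∈ ℤⁿ` be the integer
coordinates of `q·e_i ± p·e_j`. Coordinatewise `q·(z_l - [l = i]) = p·(±z_{l-1} ± [l = j])`,
and since `q < p`, an integer relation `q·a = p·b` with `b ≠ 0` forces `|a| ≥ |b| + 1`. So the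
integers `|z_l|` never decrease along the cycle, except by at most one unit at `j`, and they
strictly increase at every `l ≠ i, j` with `z_{l-1} ≠ 0`; the increments sum to zero. If
`z_{i-1} = 0`, then `z_i = 1`, the unit gained at `i` must be lost at `j`, which forces
`j = i + 1` and the sign of column `i`. If `z_{i-1} ≠ 0`, the budget forces two consecutive
tight steps `q·(X + 1) = p·X` and `q·X = p·(X - 1)`, whence `q = p`.
-/

open Finset

section IntegerSteps

variable {p q : ℝ}

theorem mul_abs_eq_mul_abs_of_mul_eq_mul (hq : 0 < q) (hp : 0 < p) {a b : ℤ}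
    (h : q * a = p * b) : q * (|a| : ℤ) = p * (|b| : ℤ) := by
  have := congrArg abs h
  rwa [abs_mul, abs_mul, abs_of_pos hq, abs_of_pos hp, ← Int.cast_abs, ← Int.cast_abs] at this

theorem abs_add_one_le_abs_of_mul_eq_mul (hq : 0 < q) (hqp : q < p) {a b : ℤ}
    (h : q * a = p * b) (hb : b ≠ 0) : |b| + 1 ≤ |a| := by
  have habs := mul_abs_eq_mul_abs_of_mul_eq_mul hq (hq.trans hqp) h
  have hb1 : (1 : ℝ) ≤ (|b| : ℤ) := by exact_mod_cast Int.one_le_abs hb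
  have : ((|b| : ℤ) : ℝ) < (|a| : ℤ) := by nlinarith
  exact_mod_cast this

end IntegerSteps

theorem sum_sub_comp_sub_eq_zero {G M : Type*} [AddGroup G] [Fintype G] [AddCommGroup M]
    (f : G → M) (s : G) : ∑ l, (f l - f (l - s)) = 0 := by
  rw [sum_sub_distrib, sub_eq_zero]
  exact ((Equiv.subRight s).sum_comp f).symm

theorem sum_le_neg_of_sum_eq_zero {ι M : Type*} [Fintype ι] [DecidableEq ι] [AddCommGroup M]
    [PartialOrder M] [IsOrderedAddMonoid M] {d : ι → M} (hsum : ∑ l, d l = 0) {j : ι}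
    (hd : ∀ l, l ≠ j → 0 ≤ d l) {t : Finset ι} (hjt : j ∉ t) :
    ∑ l ∈ t, d l ≤ -d j := by
  calc ∑ l ∈ t, d l ≤ ∑ l ∈ univ.erase j, d l :=
        sum_le_sum_of_subset_of_nonneg
          (fun l hl => mem_erase.2 ⟨ne_of_mem_of_not_mem hl hjt, mem_univ l⟩)
          (fun l hl _ => hd l (ne_of_mem_erase hl))
    _ = -d j := by
        rw [← add_sum_erase univ d (mem_univ j)] at hsum
        exact eq_neg_of_add_eq_zero_right hsum

/-- The coordinate equations of `q·e_i + e·p·e_j = (q·I - p·S) z` for the signed shift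
`(S x)_l = σ_l · x_{l-s}`, with the standing assumptions on `p`, `q`, `σ`, `e`; for `G = Fin n`,
`s = 1` and `σ = wrapSign` they express membership in `latticeA`. -/
structure ShiftRecurrence {G : Type*} [AddGroup G] [DecidableEq G] (p q : ℝ) (s i j : G)
    (σ : G → ℤ) (e : ℤ) (z : G → ℤ) : Prop where
  q_pos : 0 < q
  q_lt_p : q < p
  abs_sign : ∀ l, |σ l| = 1
  abs_le_one : |e| ≤ 1
  eq : ∀ l, q * ((z l - if l = i then 1 else 0 : ℤ) : ℝ) =
    p * ((σ l * z (l - s) + if l = j then e else 0 : ℤ) : ℝ)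

namespace ShiftRecurrence

variable {G : Type*} [AddGroup G] [DecidableEq G] {p q : ℝ} {s i j l : G} {σ : G → ℤ}
  {e : ℤ} {z : G → ℤ}

theorem abs_sign_mul (h : ShiftRecurrence p q s i j σ e z) (l : G) (x : ℤ) :
    |σ l * x| = |x| := by
  rw [abs_mul, h.abs_sign, one_mul]

theorem sign_mul_ne_zero (h : ShiftRecurrence p q s i j σ e z) {x : ℤ} (hx : x ≠ 0) :
    σ l * x ≠ 0 := by
  rwa [← abs_ne_zero, h.abs_sign_mul, abs_ne_zero]

theorem eq_of_ne (h : ShiftRecurrence p q s i j σ e z) (hli : l ≠ i) (hlj : l ≠ j) :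
    q * (z l : ℝ) = p * ((σ l * z (l - s) : ℤ) : ℝ) := by
  simpa [hli, hlj] using h.eq l

theorem eq_left (h : ShiftRecurrence p q s i j σ e z) (hij : i ≠ j) :
    q * ((z i - 1 : ℤ) : ℝ) = p * ((σ i * z (i - s) : ℤ) : ℝ) := by
  simpa [hij] using h.eq i

theorem eq_right (h : ShiftRecurrence p q s i j σ e z) (hij : i ≠ j) :
    q * (z j : ℝ) = p * ((σ j * z (j - s) + e : ℤ) : ℝ) := by
  simpa [hij.symm] using h.eq j

theorem mul_abs_of_ne (h : ShiftRecurrence p q s i j σ e z) (hli : l ≠ i) (hlj : l ≠ j) :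
    q * (|z l| : ℤ) = p * (|z (l - s)| : ℤ) := by
  rw [← h.abs_sign_mul l (z (l - s))]
  exact mul_abs_eq_mul_abs_of_mul_eq_mul h.q_pos (h.q_pos.trans h.q_lt_p) (h.eq_of_ne hli hlj)

theorem mul_abs_left (h : ShiftRecurrence p q s i j σ e z) (hij : i ≠ j) :
    q * (|z i - 1| : ℤ) = p * (|z (i - s)| : ℤ) := by
  rw [← h.abs_sign_mul i (z (i - s))]
  exact mul_abs_eq_mul_abs_of_mul_eq_mul h.q_pos (h.q_pos.trans h.q_lt_p) (h.eq_left hij)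

theorem ne_zero_of_ne (h : ShiftRecurrence p q s i j σ e z) (hli : l ≠ i) (hlj : l ≠ j)
    (hz : z l ≠ 0) : z (l - s) ≠ 0 := fun h0 => by
  simpa [h0, h.q_pos.ne', hz] using h.eq_of_ne hli hlj

theorem abs_add_one_le_of_ne (h : ShiftRecurrence p q s i j σ e z) (hli : l ≠ i) (hlj : l ≠ j)
    (hz : z (l - s) ≠ 0) : |z (l - s)| + 1 ≤ |z l| := by
  rw [← h.abs_sign_mul l (z (l - s))]
  exact abs_add_one_le_abs_of_mul_eq_mul h.q_pos h.q_lt_p (h.eq_of_ne hli hlj)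
    (h.sign_mul_ne_zero hz)

theorem eq_one_of_eq_zero (h : ShiftRecurrence p q s i j σ e z) (hij : i ≠ j)
    (hz : z (i - s) = 0) : z i = 1 := by
  simpa [hz, h.q_pos.ne', sub_eq_zero] using h.eq_left hij

theorem abs_add_one_le_left (h : ShiftRecurrence p q s i j σ e z) (hij : i ≠ j)
    (hz : z (i - s) ≠ 0) : |z (i - s)| + 1 ≤ |z i - 1| := by
  rw [← h.abs_sign_mul i (z (i - s))]
  exact abs_add_one_le_abs_of_mul_eq_mul h.q_pos h.q_lt_p (h.eq_left hij) (h.sign_mul_ne_zero hz)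

theorem abs_sub_one_le_right (h : ShiftRecurrence p q s i j σ e z) :
    |z (j - s)| - 1 ≤ |σ j * z (j - s) + e| := by
  have := abs_sub_abs_le_abs_sub (σ j * z (j - s)) (-e)
  rw [h.abs_sign_mul, abs_neg, sub_neg_eq_add] at this
  linarith [h.abs_le_one]

theorem abs_le_of_ne_right (h : ShiftRecurrence p q s i j σ e z) (hij : i ≠ j) (hlj : l ≠ j) :
    |z (l - s)| ≤ |z l| := by
  rcases eq_or_ne (z (l - s)) 0 with hz | hz
  · simp [hz]
  rcases eq_or_ne l i with rfl | hli
  · have := abs_sub (z l) 1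
    rw [abs_one] at this
    linarith [h.abs_add_one_le_left hij hz]
  · linarith [h.abs_add_one_le_of_ne hli hlj hz]

theorem abs_le_add_one_right (h : ShiftRecurrence p q s i j σ e z) (hij : i ≠ j) :
    |z (j - s)| ≤ |z j| + 1 := by
  have := h.abs_sub_one_le_right
  rcases eq_or_ne (σ j * z (j - s) + e) 0 with hb | hb
  · rw [hb, abs_zero] at this
    linarith [abs_nonneg (z j)]
  · linarith [abs_add_one_le_abs_of_mul_eq_mul h.q_pos h.q_lt_p (h.eq_right hij) hb]

theorem add_eq_zero_of_abs_lt (h : ShiftRecurrence p q s i j σ e z) (hij : i ≠ j)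
    (hlt : |z j| < |z (j - s)|) : σ j * z (j - s) + e = 0 := by
  by_contra hb
  linarith [h.abs_sub_one_le_right,
    abs_add_one_le_abs_of_mul_eq_mul h.q_pos h.q_lt_p (h.eq_right hij) hb]

theorem sum_abs_sub_abs_le (h : ShiftRecurrence p q s i j σ e z) [Fintype G] (hij : i ≠ j)
    {t : Finset G} (hjt : j ∉ t) :
    ∑ l ∈ t, (|z l| - |z (l - s)|) ≤ |z (j - s)| - |z j| := by
  have := sum_le_neg_of_sum_eq_zero (sum_sub_comp_sub_eq_zero (fun l => |z l|) s)
    (fun l hlj => sub_nonneg.2 (h.abs_le_of_ne_right hij hlj)) hjt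
  rwa [neg_sub] at this

theorem apply_sub_eq_zero (h : ShiftRecurrence p q s i j σ e z) [Fintype G] (hs : s ≠ 0)
    (hij : i ≠ j) : z (i - s) = 0 := by
  by_contra hz
  have hsi : i - s ≠ i := by simpa using hs
  have hdj := h.abs_le_add_one_right hij
  -- the steps into `i - s` and into `i` are both tight
  obtain ⟨hdi, htight⟩ : |z i| ≤ |z (i - s)| ∧
      q * (|z (i - s)| : ℤ) = p * ((|z (i - s)| - 1 : ℤ) : ℝ) := by
    rcases eq_or_ne (i - s) j with rfl | hk
    · have hb : σ (i - s) * z (i - s - s) + e ≠ 0 := fun hb => hz (by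
        simpa [hb, h.q_pos.ne'] using h.eq_right hij)
      have hjb := abs_add_one_le_abs_of_mul_eq_mul h.q_pos h.q_lt_p (h.eq_right hij) hb
      have hdi := h.sum_abs_sub_abs_le hij (t := {i}) (by simpa using hij.symm)
      rw [sum_singleton] at hdi
      have hb' : |σ (i - s) * z (i - s - s) + e| = |z (i - s)| - 1 := by
        linarith [h.abs_sub_one_le_right, h.abs_le_of_ne_right hij hij]
      refine ⟨by linarith [h.abs_sub_one_le_right], ?_⟩
      rw [← hb']
      exact mul_abs_eq_mul_abs_of_mul_eq_mul h.q_pos (h.q_pos.trans h.q_lt_p) (h.eq_right hij)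
    · have hstep := h.abs_add_one_le_of_ne hsi hk (h.ne_zero_of_ne hsi hk hz)
      have hpair := h.sum_abs_sub_abs_le hij (t := {i - s, i}) (by simp [hk.symm, hij.symm])
      rw [sum_pair hsi] at hpair
      have hdi := h.abs_le_of_ne_right hij hij
      refine ⟨by linarith, ?_⟩
      rw [h.mul_abs_of_ne hsi hk]
      congr 2
      linarith
  have htri : |z i - 1| ≤ |z i| + 1 := by simpa using abs_sub (z i) 1
  have hI : |z i - 1| = |z (i - s)| + 1 := by linarith [h.abs_add_one_le_left hij hz]
  have := h.mul_abs_left hij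
  rw [hI] at this
  push_cast at this htight
  linarith [h.q_lt_p]

theorem eq_add (h : ShiftRecurrence p q s i j σ e z) [Fintype G] (hs : s ≠ 0) (hij : i ≠ j) :
    j = i + s ∧ σ j + e = 0 := by
  have hz := h.apply_sub_eq_zero hs hij
  have hzi := h.eq_one_of_eq_zero hij hz
  have hsi : i + s ≠ i := by simpa using hs
  have hj : j = i + s := by
    by_contra hne
    have hstep := h.abs_add_one_le_of_ne hsi (Ne.symm hne) (by simp [hzi])
    have hpair := h.sum_abs_sub_abs_le hij (t := {i, i + s}) (by simp [hij.symm, hne])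
    rw [sum_pair hsi.symm, add_sub_cancel_right, hz, hzi, abs_zero, abs_one] at hpair
    rw [add_sub_cancel_right, hzi, abs_one] at hstep
    linarith [h.abs_le_add_one_right hij]
  subst hj
  have hdi := h.sum_abs_sub_abs_le hij (t := {i}) (by simpa using hij.symm)
  simp only [sum_singleton, hz, hzi, add_sub_cancel_right, abs_zero, abs_one] at hdi
  have := h.add_eq_zero_of_abs_lt hij (by rw [add_sub_cancel_right, hzi, abs_one]; omega)
  rw [add_sub_cancel_right, hzi, mul_one] at this
  exact ⟨rfl, this⟩

end ShiftRecurrence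

/-- The sign picked up by the negacyclic shift: `tilingMatrix p q n = q·I - p·S` with
`(S x)_l = wrapSign l · x_{l-1}`. -/
def wrapSign {n : ℕ} (l : Fin n) : ℤ := if (l : ℕ) = 0 then -1 else 1

section TilingMatrix

variable {p q : ℝ} {n : ℕ}

theorem tilingMatrix_apply (l k : Fin (n + 2)) :
    tilingMatrix p q (n + 2) l k =
      (if k = l then q else 0) - (if k = l - 1 then p * wrapSign l else 0) := by
  have hl := l.isLt
  have hk := k.isLt
  simp only [tilingMatrix, Matrix.of_apply, wrapSign, Fin.ext_iff, Fin.coe_sub_one, Fin.val_zero]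
  split_ifs <;> push_cast <;> first | ring1 | (exfalso; omega)

theorem tilingMatrix_mulVec_apply (x : Fin (n + 2) → ℝ) (l : Fin (n + 2)) :
    (tilingMatrix p q (n + 2)).mulVec x l = q * x l - p * wrapSign l * x (l - 1) := by
  simp only [Matrix.mulVec, dotProduct, tilingMatrix_apply, sub_mul, ite_mul, zero_mul,
    sum_sub_distrib, sum_ite_eq', mem_univ, if_true]

theorem tilingMatrix_col (k : Fin (n + 2)) :
    (fun l => tilingMatrix p q (n + 2) l k) =
      q • Pi.single k 1 - (p * wrapSign (k + 1)) • Pi.single (k + 1) 1 := by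
  ext l
  simp only [tilingMatrix_apply, Pi.sub_apply, Pi.smul_apply, Pi.single_apply, smul_eq_mul,
    mul_ite, mul_one, mul_zero, eq_comm (a := k), sub_eq_iff_eq_add]
  split_ifs <;> simp_all

theorem shiftRecurrence_of_mulVec_eq (hq : 0 < q) (hqp : q < p) {i j : Fin (n + 2)} {e : ℤ}
    (he : |e| ≤ 1) {z : Fin (n + 2) → ℤ}
    (hz : q • Pi.single i 1 + ((e : ℝ) * p) • Pi.single j 1 =
      (tilingMatrix p q (n + 2)).mulVec fun l => (z l : ℝ)) :
    ShiftRecurrence p q 1 i j wrapSign e z where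
  q_pos := hq
  q_lt_p := hqp
  abs_sign l := by unfold wrapSign; split_ifs <;> simp
  abs_le_one := he
  eq l := by
    have := congrFun hz l
    rw [tilingMatrix_mulVec_apply] at this
    simp only [Pi.add_apply, Pi.smul_apply, Pi.single_apply, smul_eq_mul, mul_ite, mul_one,
      mul_zero] at this
    push_cast
    split_ifs at this ⊢ <;> linarith

end TilingMatrix

theorem qe_pm_pe_not_in_lattice (p q : ℝ) (hq : 0 < q) (hqp : q < p) (n : ℕ) (hn : 2 ≤ n)
    (i j : Fin n) (hij : i ≠ j) (ε : ℝ) (hε : ε = 1 ∨ ε = -1)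
    (hcol : ∀ k : Fin n,
      (q • (Pi.single i 1 : Fin n → ℝ) + (ε * p) • (Pi.single j 1 : Fin n → ℝ)) ≠
        fun l => tilingMatrix p q n l k) :
    q • (Pi.single i 1 : Fin n → ℝ) + (ε * p) • (Pi.single j 1 : Fin n → ℝ) ∉
      latticeA p q n := by
  obtain ⟨n, rfl⟩ : ∃ m, n = m + 2 := ⟨n - 2, by omega⟩
  rintro ⟨z, hz⟩
  obtain ⟨e, he, rfl⟩ : ∃ e : ℤ, |e| ≤ 1 ∧ (e : ℝ) = ε := by
    rcases hε with rfl | rfl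
    exacts [⟨1, by norm_num, by norm_num⟩, ⟨-1, by norm_num, by norm_num⟩]
  obtain ⟨rfl, hsign⟩ := (shiftRecurrence_of_mulVec_eq hq hqp he hz).eq_add one_ne_zero hij
  apply hcol i
  rw [tilingMatrix_col, eq_neg_of_add_eq_zero_right hsign, sub_eq_add_neg, ← neg_smul]
  congr 2
  push_cast
  ring
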